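/- Let θ be a proper convex piecewise linear function on ℝ^m and (z̄,v̄) ∈ gph ∂θ. Then the second-order subdifferential of θ is positive semidefinite in the sense that ⟨q,u⟩ ≥ 0 for every u ∈ ℝ^m and every q ∈ ∂²θ(z̄,v̄)(u). -/

import Mathlib

/-!
Since `θ` is proper, `∂θ` is monotone; since `θ + ½‖· - s‖²` attains its minimum on the closed
domain, every `s` splits as `z + v` with `v ∈ ∂θ(z)`. Given a Fréchet normal `(w, -u)` to the
graph at `(z, v)`, solve `z' + v' = z + v + t (w - u)` with `v' ∈ ∂θ(z')`: monotonicity keeps this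
graph point within `t ‖w - u‖` of `(z, v)` and makes its pairing with `(w, -u)` at least
`t ‖w - u‖ (‖w - u‖ - ‖w + u‖) / 2`. Letting `t → 0` gives `‖w - u‖ ≤ ‖w + u‖`, i.e. `⟪w, u⟫ ≥ 0`,
and this closed condition passes to limiting normals.
-/

noncomputable section
open Set Filter Topology Metric
open scoped RealInnerProductSpace Pointwise NNReal Classical

/-- `Euc m` is the Euclidean space `ℝ^m`. -/
abbrev Euc (m : ℕ) := EuclideanSpace ℝ (Fin m)

variable {F G : Type*} [NormedAddCommGroup F] [InnerProductSpace ℝ F]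
  [NormedAddCommGroup G] [InnerProductSpace ℝ G]

/-- The (convex) subdifferential of an extended-real-valued function:
`∂θ(z) = {v : θ(z') ≥ θ(z) + ⟨v, z' - z⟩ for all z'}`. -/
def subdiff (θ : F → EReal) (z : F) : Set F :=
  {v | ∀ z', θ z + ((⟪v, z' - z⟫ : ℝ) : EReal) ≤ θ z'}

/-- The Fréchet (regular) normal cone to `Ω` at `x`:
vectors `v` with `limsup_{y → x, y ∈ Ω} ⟨v, y - x⟩ / ‖y - x‖ ≤ 0`. -/
def frechetNormal (Ω : Set F) (x : F) : Set F :=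
  {v | Filter.limsup (fun y => ⟪v, y - x⟫ / ‖y - x‖) (𝓝[Ω] x) ≤ 0}

/-- The limiting (Mordukhovich) normal cone to `Ω` at `x`. -/
def limitingNormal (Ω : Set F) (x : F) : Set F :=
  {v | ∃ xs vs : ℕ → F, (∀ k, xs k ∈ Ω) ∧ Filter.Tendsto xs Filter.atTop (𝓝 x) ∧
    Filter.Tendsto vs Filter.atTop (𝓝 v) ∧ ∀ k, vs k ∈ frechetNormal Ω (xs k)}

/-- Pairing into the `ℓ²`-product of two inner product spaces. -/
def pl2 (x : F) (y : G) : WithLp 2 (F × G) := (WithLp.equiv 2 (F × G)).symm (x, y)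

/-- The second-order subdifferential (generalized Hessian)
`∂²θ(z,v)(u) = {w : (w,-u) ∈ N((z,v); gph ∂θ)}`. -/
def sosd (θ : F → EReal) (z v : F) (u : F) : Set F :=
  {w | pl2 w (-u) ∈ limitingNormal
    {q : WithLp 2 (F × F) | ((WithLp.equiv 2 (F × F)) q).2 ∈ subdiff θ ((WithLp.equiv 2 (F × F)) q).1}
    (pl2 z v)}

/-- The polyhedral domain `{z : ⟨d i, z⟩ ≤ β i for all i}` of a CPWL function. -/
def cpwlDom {m p : ℕ} (d : Fin p → Euc m) (β : Fin p → ℝ) : Set (Euc m) :=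
  {z | ∀ i, ⟪d i, z⟫ ≤ β i}

/-- The CPWL function determined by the data `(a, α, d, β)`:
`θ(z) = max_i (⟨a i, z⟩ - α i)` on its polyhedral domain and `+∞` outside. -/
def cpwlFun {m l p : ℕ} (a : Fin l → Euc m) (α : Fin l → ℝ) (d : Fin p → Euc m)
    (β : Fin p → ℝ) : Euc m → EReal :=
  fun z => if z ∈ cpwlDom d β then (((⨆ i, (⟪a i, z⟫ - α i)) : ℝ) : EReal) else ⊤

/-- Active indices of the max expression at `z`. -/
def Kact {m l p : ℕ} (a : Fin l → Euc m) (α : Fin l → ℝ) (d : Fin p → Euc m) (β : Fin p → ℝ)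
    (z : Euc m) : Set (Fin l) :=
  {i | cpwlFun a α d β z = ((⟪a i, z⟫ - α i : ℝ) : EReal)}

/-- Active indices of the domain inequalities at `z`. -/
def Iact {m p : ℕ} (d : Fin p → Euc m) (β : Fin p → ℝ) (z : Euc m) : Set (Fin p) :=
  {i | ⟪d i, z⟫ = β i}

/-- Convex conic hull: all finite nonnegative combinations of elements of `s`. -/
def coneHull (s : Set F) : Set F :=
  {x | ∃ (n : ℕ) (c : Fin n → ℝ) (y : Fin n → F), (∀ i, 0 ≤ c i) ∧ (∀ i, y i ∈ s) ∧
    x = ∑ i, c i • y i}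

/-- `Spar θ z` is the linear subspace parallel to the affine hull of `∂θ(z)`. -/
def Spar (θ : F → EReal) (z : F) : Submodule ℝ F := (affineSpan ℝ (subdiff θ z)).direction

/-- A convex polyhedron: a finite intersection of closed halfspaces. -/
def IsPolyhedron {V : Type*} [AddCommGroup V] [Module ℝ V] (C : Set V) : Prop :=
  ∃ (N : ℕ) (f : Fin N → V →ₗ[ℝ] ℝ) (b : Fin N → ℝ), C = {x | ∀ i, f i x ≤ b i}

/-- A proper convex piecewise linear function with values in `ℝ ∪ {+∞}`:
its epigraph is a convex polyhedron, it never takes the value `-∞`, and it is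
not identically `+∞`. -/
def IsCPWL {V : Type*} [AddCommGroup V] [Module ℝ V] (f : V → EReal) : Prop :=
  IsPolyhedron {xt : V × ℝ | f xt.1 ≤ (xt.2 : EReal)} ∧ (∀ x, f x ≠ ⊥) ∧ (∃ x, f x ≠ ⊤)

/-- Local argmin set `M_γ(w,v)` of `x ↦ φ(x,w) - ⟨v,x⟩` over the ball `‖x - xb‖ ≤ γ`,
with the convention that minimizers at which the objective is `+∞` are discarded. -/
def argminLoc {n d : ℕ} (φ : Euc n → Euc d → EReal) (xb : Euc n) (γ : ℝ) (w : Euc d)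
    (v : Euc n) : Set (Euc n) :=
  {x | ‖x - xb‖ ≤ γ ∧ φ x w ≠ ⊤ ∧
    ∀ y, ‖y - xb‖ ≤ γ → φ x w - ((⟪v, x⟫ : ℝ) : EReal) ≤ φ y w - ((⟪v, y⟫ : ℝ) : EReal)}

/-- Local optimal value `m_γ(w,v)` of `x ↦ φ(x,w) - ⟨v,x⟩` over the ball `‖x - xb‖ ≤ γ`. -/
def infLoc {n d : ℕ} (φ : Euc n → Euc d → EReal) (xb : Euc n) (γ : ℝ) (w : Euc d)
    (v : Euc n) : EReal :=
  ⨅ x ∈ {x : Euc n | ‖x - xb‖ ≤ γ}, (φ x w - ((⟪v, x⟫ : ℝ) : EReal))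

/-- `xb` is a fully stable locally optimal solution of
`minimize φ(x,wb) - ⟨vb,x⟩` : for some `γ > 0` and neighborhoods `W × V` of `(wb,vb)`,
the local argmin map is single-valued and Lipschitz with value `xb` at `(wb,vb)`, and the
local optimal value function is finite and Lipschitz. -/
def FullyStableSol {n d : ℕ} (φ : Euc n → Euc d → EReal) (xb : Euc n) (wb : Euc d)
    (vb : Euc n) : Prop :=
  ∃ γ > (0 : ℝ), ∃ W ∈ 𝓝 wb, ∃ V ∈ 𝓝 vb,
    (∃ σ : Euc d × Euc n → Euc n,
      (∃ K : ℝ≥0, LipschitzOnWith K σ (W ×ˢ V)) ∧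
      (∀ w ∈ W, ∀ v ∈ V, argminLoc φ xb γ w v = {σ (w, v)}) ∧ σ (wb, vb) = xb) ∧
    (∃ μ : Euc d × Euc n → ℝ,
      (∃ K : ℝ≥0, LipschitzOnWith K μ (W ×ˢ V)) ∧
      ∀ w ∈ W, ∀ v ∈ V, infLoc φ xb γ w v = ((μ (w, v) : ℝ) : EReal))

/-- The partial limiting subdifferential `∂ₓψ(x,w)` defined through the limiting normal
cone to the epigraph of `ψ(·,w)`. -/
def partialSubdiffX {n d : ℕ} (ψ : Euc n → Euc d → EReal) (x : Euc n) (w : Euc d) :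
    Set (Euc n) :=
  {v | ∃ r : ℝ, ψ x w = (r : EReal) ∧
    pl2 v (-1 : ℝ) ∈ limitingNormal
      {q : WithLp 2 (Euc n × ℝ) |
        ψ ((WithLp.equiv 2 (Euc n × ℝ)) q).1 w ≤ ((((WithLp.equiv 2 (Euc n × ℝ)) q).2 : ℝ) : EReal)}
      (pl2 x r)}

/-- The coderivative `D*∂ₓψ(xb,wb,qb)(u)` of the partial subdifferential mapping,
via the limiting normal cone to its graph in `ℝ^n × ℝ^d × ℝ^n`. -/
def coderivPartialSubdiffX {n d : ℕ} (ψ : Euc n → Euc d → EReal) (xb : Euc n) (wb : Euc d)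
    (qb : Euc n) (u : Euc n) : Set (Euc n × Euc d) :=
  {P | pl2 (pl2 P.1 P.2) (-u) ∈ limitingNormal
    {t : WithLp 2 (WithLp 2 (Euc n × Euc d) × Euc n) |
      ((WithLp.equiv 2 (WithLp 2 (Euc n × Euc d) × Euc n)) t).2 ∈ partialSubdiffX ψ
        ((WithLp.equiv 2 (Euc n × Euc d)) (((WithLp.equiv 2 (WithLp 2 (Euc n × Euc d) × Euc n)) t).1)).1
        ((WithLp.equiv 2 (Euc n × Euc d)) (((WithLp.equiv 2 (WithLp 2 (Euc n × Euc d) × Euc n)) t).1)).2}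
    (pl2 (pl2 xb wb) qb)}

/-- Partial Hessian in `x` : the derivative in `x` of the partial gradient in `x`. -/
def hessXX {n d : ℕ} (g : Euc n → Euc d → ℝ) (xb : Euc n) (wb : Euc d) : Euc n →L[ℝ] Euc n :=
  fderiv ℝ (fun x => gradient (fun x' => g x' wb) x) xb

/-- Mixed partial Hessian: derivative in `w` of the partial gradient in `x`. -/
def hessWX {n d : ℕ} (g : Euc n → Euc d → ℝ) (xb : Euc n) (wb : Euc d) : Euc d →L[ℝ] Euc n :=
  fderiv ℝ (fun w => gradient (fun x' => g x' w) xb) wb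

theorem frechetNormal_eventually_lt {Ω : Set F} {x n : F} (hn : n ∈ frechetNormal Ω x) {c : ℝ}
    (hc : 0 < c) :
    ∀ᶠ y in 𝓝[Ω] x, ⟪n, y - x⟫ / ‖y - x‖ < c :=
  eventually_lt_of_limsup_lt (lt_of_le_of_lt hn hc) <| isBoundedUnder_of ⟨‖n‖, fun _ =>
    div_le_of_le_mul₀ (norm_nonneg _) (norm_nonneg _) (real_inner_le_norm _ _)⟩

def IsMonotoneOperator (T : F → Set F) : Prop :=
  ∀ ⦃z₁ v₁ z₂ v₂ : F⦄, v₁ ∈ T z₁ → v₂ ∈ T z₂ → 0 ≤ ⟪v₂ - v₁, z₂ - z₁⟫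

def graphL2 (T : F → Set F) : Set (WithLp 2 (F × F)) := {q | q.snd ∈ T q.fst}

lemma norm_sub_le_norm_add_of_inner_nonneg {h g : F} (hhg : 0 ≤ ⟪h, g⟫) : ‖h - g‖ ≤ ‖h + g‖ := by
  have : ‖h - g‖ ^ 2 ≤ ‖h + g‖ ^ 2 := by rw [norm_sub_sq_real, norm_add_sq_real]; linarith
  exact le_of_sq_le_sq this (norm_nonneg _)

lemma sq_norm_add_sq_norm_le_of_inner_nonneg {h g : F} (hhg : 0 ≤ ⟪h, g⟫) :
    ‖h‖ ^ 2 + ‖g‖ ^ 2 ≤ ‖h + g‖ ^ 2 := by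
  rw [norm_add_sq_real]; linarith

lemma mul_norm_sub_mul_le_inner_sub_inner {w u h g : F} {t : ℝ} (ht : 0 ≤ t) (hhg : 0 ≤ ⟪h, g⟫)
    (hsum : h + g = t • (w - u)) :
    t * ‖w - u‖ * (‖w - u‖ - ‖w + u‖) ≤ 2 * (⟪w, h⟫ - ⟪u, g⟫) := by
  have hsplit : 2 * (⟪w, h⟫ - ⟪u, g⟫) = ⟪w - u, h + g⟫ + ⟪w + u, h - g⟫ := by
    simp only [inner_add_left, inner_sub_left, inner_add_right, inner_sub_right]; ring
  have hlong : ⟪w - u, h + g⟫ = t * ‖w - u‖ ^ 2 := by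
    rw [hsum, real_inner_smul_right, real_inner_self_eq_norm_sq]
  have hshort : -(‖w + u‖ * (t * ‖w - u‖)) ≤ ⟪w + u, h - g⟫ := by
    have hhg' : ‖h - g‖ ≤ t * ‖w - u‖ := by
      simpa [hsum, norm_smul, abs_of_nonneg ht] using norm_sub_le_norm_add_of_inner_nonneg hhg
    nlinarith [neg_abs_le ⟪w + u, h - g⟫, abs_real_inner_le_norm (w + u) (h - g),
      norm_nonneg (w + u)]
  rw [hsplit, hlong]; nlinarith

theorem inner_nonneg_of_mem_frechetNormal_graphL2 {T : F → Set F} (hT : IsMonotoneOperator T)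
    (hsurj : ∀ s, ∃ z, s - z ∈ T z) {x n : WithLp 2 (F × F)} (hx : x ∈ graphL2 T)
    (hn : n ∈ frechetNormal (graphL2 T) x) : 0 ≤ ⟪n.fst, -n.snd⟫ := by
  set w := n.fst
  set u := -n.snd
  by_contra! hwu
  have hnorm : ‖w + u‖ < ‖w - u‖ := by
    refine lt_of_pow_lt_pow_left₀ 2 (norm_nonneg _) ?_
    rw [norm_add_sq_real, norm_sub_sq_real]; linarith
  set c := (‖w - u‖ - ‖w + u‖) / 2
  have hc : 0 < c := by simp only [c]; linarith
  have hwu_pos : 0 < ‖w - u‖ := (norm_nonneg _).trans_lt hnorm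
  obtain ⟨δ, hδ, hball⟩ := Metric.mem_nhdsWithin_iff.1 (frechetNormal_eventually_lt hn hc)
  set t := δ / (2 * ‖w - u‖)
  have ht : 0 < t := by positivity
  have hstep : t * ‖w - u‖ < δ := by
    simp only [t]; field_simp; linarith
  obtain ⟨z, hz⟩ := hsurj (x.fst + x.snd + t • (w - u))
  set y : WithLp 2 (F × F) := WithLp.toLp 2 (z, x.fst + x.snd + t • (w - u) - z)
  have hy : y ∈ graphL2 T := hz
  have hmono : 0 ≤ ⟪(y - x).fst, (y - x).snd⟫ := by
    rw [real_inner_comm]; exact hT hx hy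
  have hsum : (y - x).fst + (y - x).snd = t • (w - u) := by
    simp only [y, WithLp.sub_fst, WithLp.sub_snd, WithLp.toLp_fst, WithLp.toLp_snd]; abel
  have hdist : ‖y - x‖ ≤ t * ‖w - u‖ := by
    refine le_of_sq_le_sq ?_ (by positivity)
    rw [WithLp.prod_norm_sq_eq_of_L2]
    refine (sq_norm_add_sq_norm_le_of_inner_nonneg hmono).trans_eq ?_
    rw [hsum, norm_smul, Real.norm_of_nonneg ht.le, mul_pow]
  have hgain : c * (t * ‖w - u‖) ≤ ⟪n, y - x⟫ := by
    have := mul_norm_sub_mul_le_inner_sub_inner ht.le hmono hsum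
    have hinner : ⟪n, y - x⟫ = ⟪w, (y - x).fst⟫ - ⟪u, (y - x).snd⟫ := by
      rw [WithLp.prod_inner_apply]; simp only [u, inner_neg_left, sub_neg_eq_add]; rfl
    rw [hinner]; simp only [c]; linarith
  have hyx : 0 < ‖y - x‖ := by
    refine norm_pos_iff.2 fun h => ?_
    rw [h, inner_zero_right] at hgain
    exact (mul_pos hc (mul_pos ht hwu_pos)).not_ge hgain
  have hlt : ⟪n, y - x⟫ / ‖y - x‖ < c :=
    hball ⟨Metric.mem_ball.2 ((dist_eq_norm y x).trans_lt (hdist.trans_lt hstep)), hy⟩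
  rw [div_lt_iff₀ hyx] at hlt
  nlinarith

theorem inner_nonneg_of_mem_limitingNormal_graphL2 {T : F → Set F} (hT : IsMonotoneOperator T)
    (hsurj : ∀ s, ∃ z, s - z ∈ T z) {x : WithLp 2 (F × F)} {w u : F}
    (h : pl2 w (-u) ∈ limitingNormal (graphL2 T) x) : 0 ≤ ⟪w, u⟫ := by
  obtain ⟨xs, ns, hxs, -, hns, hfrechet⟩ := h
  have hclosed : IsClosed {n : WithLp 2 (F × F) | 0 ≤ ⟪n.fst, -n.snd⟫} :=
    isClosed_le continuous_const
      ((WithLp.continuous_fst 2 F F).inner (WithLp.continuous_snd 2 F F).neg)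
  simpa [pl2] using hclosed.mem_of_tendsto hns (Eventually.of_forall fun k =>
    inner_nonneg_of_mem_frechetNormal_graphL2 hT hsurj (hxs k) (hfrechet k))

lemma ne_top_of_mem_subdiff {θ : F → EReal} (htop : ∃ x, θ x ≠ ⊤) {z v : F}
    (hv : v ∈ subdiff θ z) : θ z ≠ ⊤ := by
  intro hz
  obtain ⟨x, hx⟩ := htop
  have := hv x
  rw [hz, EReal.top_add_coe, top_le_iff] at this
  exact hx this

theorem isMonotoneOperator_subdiff {θ : F → EReal} (hbot : ∀ x, θ x ≠ ⊥) (htop : ∃ x, θ x ≠ ⊤) :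
    IsMonotoneOperator (subdiff θ) := by
  intro z₁ v₁ z₂ v₂ h₁ h₂
  have hreal : ∀ {z v}, v ∈ subdiff θ z → θ z = ((θ z).toReal : EReal) := fun hv =>
    (EReal.coe_toReal (ne_top_of_mem_subdiff htop hv) (hbot _)).symm
  have e₁ := h₁ z₂
  have e₂ := h₂ z₁
  rw [hreal h₁, hreal h₂, ← EReal.coe_add, EReal.coe_le_coe_iff] at e₁ e₂
  have : ⟪v₂, z₁ - z₂⟫ = -⟪v₂, z₂ - z₁⟫ := by rw [← inner_neg_right, neg_sub]
  rw [inner_sub_left]; linarith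

lemma mem_subdiff_ite {C : Set F} {f : F → ℝ} {z v : F} (hz : z ∈ C)
    (h : ∀ y ∈ C, f z + ⟪v, y - z⟫ ≤ f y) :
    v ∈ subdiff (fun x => if x ∈ C then (f x : EReal) else ⊤) z := by
  intro y
  by_cases hy : y ∈ C
  · simp only [if_pos hz, if_pos hy]
    exact_mod_cast h y hy
  · simp only [if_neg hy]; exact le_top

theorem exists_isMinOn_add_half_sq_norm [ProperSpace F] {C : Set F} {f : F → ℝ} (hC : IsClosed C)
    (hne : C.Nonempty) (hf : ContinuousOn f C) {a : F} {b : ℝ} (hab : ∀ x ∈ C, ⟪a, x⟫ - b ≤ f x)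
    (s : F) : ∃ z ∈ C, IsMinOn (fun x => f x + ‖x - s‖ ^ 2 / 2) C z := by
  obtain ⟨x₀, hx₀⟩ := hne
  refine ContinuousOn.exists_isMinOn' (f := fun x => f x + ‖x - s‖ ^ 2 / 2)
    (hf.add (by fun_prop)) hC hx₀ ?_
  set K := ⟪a, s⟫ - ‖a‖ ^ 2 / 2 - b
  have hsquare : ∀ x, ⟪a, x⟫ - b + ‖x - s‖ ^ 2 / 2 = ‖x - (s - a)‖ ^ 2 / 2 + K := by
    intro x
    simp only [K]
    rw [show x - (s - a) = (x - s) + a by abel, norm_add_sq_real, inner_sub_left,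
      real_inner_comm a x]
    linarith [real_inner_comm a s]
  have hdist : Tendsto (fun x => ‖x - (s - a)‖) (cocompact F) atTop :=
    tendsto_atTop_mono (fun x => norm_sub_norm_le x (s - a))
      (tendsto_atTop_add_const_right _ _ tendsto_norm_cocompact_atTop)
  have hcoercive : Tendsto (fun x => ‖x - (s - a)‖ ^ 2 / 2 + K) (cocompact F) atTop :=
    tendsto_atTop_add_const_right _ _
      (((tendsto_pow_atTop two_ne_zero).comp hdist).atTop_div_const two_pos)
  filter_upwards [(hcoercive.eventually_ge_atTop (f x₀ + ‖x₀ - s‖ ^ 2 / 2)).filter_mono inf_le_left,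
    mem_inf_of_right (mem_principal_self C)] with x hx hxC
  linarith [hab x hxC, hsquare x]

theorem le_of_isMinOn_add_half_sq_norm {C : Set F} {f : F → ℝ} (hf : ConvexOn ℝ C f) {s z y : F}
    (hz : z ∈ C) (hmin : IsMinOn (fun x => f x + ‖x - s‖ ^ 2 / 2) C z) (hy : y ∈ C) :
    f z + ⟪s - z, y - z⟫ ≤ f y := by
  have hsmall : ∀ t ∈ Ioc (0 : ℝ) 1, f z + ⟪s - z, y - z⟫ ≤ f y + t * ‖y - z‖ ^ 2 / 2 := by
    rintro t ⟨ht₀, ht₁⟩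
    have hcomb : (1 - t) • z + t • y = z + t • (y - z) := by module
    have hconv : f (z + t • (y - z)) ≤ (1 - t) * f z + t * f y := by
      simpa [hcomb] using hf.2 hz hy (sub_nonneg.2 ht₁) ht₀.le (by ring)
    have hle : f z + ‖z - s‖ ^ 2 / 2 ≤ f (z + t • (y - z)) + ‖z + t • (y - z) - s‖ ^ 2 / 2 :=
      hmin (hf.1.add_smul_sub_mem hz hy ⟨ht₀.le, ht₁⟩)
    have hexpand : ‖z + t • (y - z) - s‖ ^ 2
        = ‖z - s‖ ^ 2 - 2 * t * ⟪s - z, y - z⟫ + t ^ 2 * ‖y - z‖ ^ 2 := by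
      rw [show z + t • (y - z) - s = (z - s) + t • (y - z) by abel, norm_add_sq_real,
        real_inner_smul_right, norm_smul, Real.norm_of_nonneg ht₀.le, ← neg_sub s z,
        inner_neg_left]
      ring
    have : t * (f z + ⟪s - z, y - z⟫) ≤ t * (f y + t * ‖y - z‖ ^ 2 / 2) := by
      nlinarith
    exact le_of_mul_le_mul_left this ht₀
  have hlim : Tendsto (fun t : ℝ => f y + t * ‖y - z‖ ^ 2 / 2) (𝓝[>] 0) (𝓝 (f y)) :=
    ((by fun_prop : Continuous fun t : ℝ => f y + t * ‖y - z‖ ^ 2 / 2).tendsto' 0 _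
      (by simp)).mono_left nhdsWithin_le_nhds
  exact ge_of_tendsto hlim (eventually_of_mem (Ioc_mem_nhdsGT one_pos) hsmall)

theorem exists_sub_mem_subdiff_ite [ProperSpace F] {C : Set F} {f : F → ℝ} (hC : IsClosed C)
    (hne : C.Nonempty) (hconv : ConvexOn ℝ C f) (hcont : ContinuousOn f C) {a : F} {b : ℝ}
    (hab : ∀ x ∈ C, ⟪a, x⟫ - b ≤ f x) (s : F) :
    ∃ z, s - z ∈ subdiff (fun x => if x ∈ C then (f x : EReal) else ⊤) z := by
  obtain ⟨z, hz, hmin⟩ := exists_isMinOn_add_half_sq_norm hC hne hcont hab s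
  exact ⟨z, mem_subdiff_ite hz fun y hy => le_of_isMinOn_add_half_sq_norm hconv hz hmin hy⟩

theorem ConvexOn.ciSup {E ι : Type*} [AddCommGroup E] [Module ℝ E] [Finite ι] [Nonempty ι]
    {s : Set E} {f : ι → E → ℝ} (hf : ∀ i, ConvexOn ℝ s (f i)) :
    ConvexOn ℝ s fun x => ⨆ i, f i x := by
  refine ⟨(hf (Classical.arbitrary ι)).1, fun x hx y hy r t hr ht hrt => ciSup_le fun i => ?_⟩
  have hle : ∀ z, f i z ≤ ⨆ j, f j z := fun z => le_ciSup (Finite.bddAbove_range fun j => f j z) i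
  exact ((hf i).2 hx hy hr ht hrt).trans
    (add_le_add (smul_le_smul_of_nonneg_left (hle x) hr) (smul_le_smul_of_nonneg_left (hle y) ht))

theorem Continuous.ciSup {X ι : Type*} [TopologicalSpace X] [Fintype ι] [Nonempty ι]
    {f : ι → X → ℝ} (hf : ∀ i, Continuous (f i)) : Continuous fun x => ⨆ i, f i x := by
  simp only [← Finset.sup'_univ_eq_ciSup]
  exact Continuous.finset_sup'_apply _ fun i _ => hf i

lemma convexOn_inner_sub_const (a : F) (c : ℝ) : ConvexOn ℝ univ fun z => ⟪a, z⟫ - c :=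
  ((innerₛₗ ℝ a).convexOn convex_univ).sub (concaveOn_const c convex_univ)

lemma isClosed_cpwlDom {m p : ℕ} (d : Fin p → Euc m) (β : Fin p → ℝ) :
    IsClosed (cpwlDom d β) := by
  simp only [cpwlDom, ofPred_forall]
  exact isClosed_iInter fun i => isClosed_le (by fun_prop) continuous_const

lemma convex_cpwlDom {m p : ℕ} (d : Fin p → Euc m) (β : Fin p → ℝ) :
    Convex ℝ (cpwlDom d β) := by
  simp only [cpwlDom, ofPred_forall]
  exact convex_iInter fun i => convex_halfSpace_le (innerₛₗ ℝ (d i)).isLinear (β i)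

lemma cpwlFun_ne_bot {m l p : ℕ} (a : Fin l → Euc m) (α : Fin l → ℝ) (d : Fin p → Euc m)
    (β : Fin p → ℝ) (z : Euc m) : cpwlFun a α d β z ≠ ⊥ := by
  unfold cpwlFun; split_ifs <;> simp

lemma cpwlFun_ne_top {m l p : ℕ} (a : Fin l → Euc m) (α : Fin l → ℝ) {d : Fin p → Euc m}
    {β : Fin p → ℝ} {z : Euc m} (hz : z ∈ cpwlDom d β) : cpwlFun a α d β z ≠ ⊤ := by
  simp [cpwlFun, hz]

theorem sosd_cpwl_pos_semidefinite_general {m l p : ℕ} (hl : 0 < l)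
    (a : Fin l → Euc m) (α : Fin l → ℝ) (d : Fin p → Euc m) (β : Fin p → ℝ)
    (hdom : (cpwlDom d β).Nonempty) (zb : Euc m)
    (vb : Euc m) :
    ∀ u : Euc m, ∀ q ∈ sosd (cpwlFun a α d β) zb vb u, 0 ≤ ⟪q, u⟫ := by
  have : Nonempty (Fin l) := ⟨⟨0, hl⟩⟩
  have hmono : IsMonotoneOperator (subdiff (cpwlFun a α d β)) :=
    isMonotoneOperator_subdiff (cpwlFun_ne_bot a α d β) (hdom.imp fun _ => cpwlFun_ne_top a α)
  have hsurj : ∀ s, ∃ z, s - z ∈ subdiff (cpwlFun a α d β) z :=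
    exists_sub_mem_subdiff_ite (isClosed_cpwlDom d β) hdom
      ((ConvexOn.ciSup fun i => convexOn_inner_sub_const (a i) (α i)).subset (subset_univ _)
        (convex_cpwlDom d β))
      (Continuous.ciSup fun i => by fun_prop).continuousOn
      (fun x _ => le_ciSup (Finite.bddAbove_range fun i => ⟪a i, x⟫ - α i) ⟨0, hl⟩)
  intro u q hq
  exact inner_nonneg_of_mem_limitingNormal_graphL2 (T := subdiff (cpwlFun a α d β)) hmono hsurj hq

/-- Positive semidefiniteness of the second-order subdifferential of a
CPWL (convex) function: `⟨q,u⟩ ≥ 0` whenever `q ∈ ∂²θ(zb,vb)(u)`. -/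
theorem sosd_cpwl_pos_semidefinite {m l p : ℕ} (hl : 0 < l)
    (a : Fin l → Euc m) (α : Fin l → ℝ) (d : Fin p → Euc m) (β : Fin p → ℝ)
    (hdom : (cpwlDom d β).Nonempty) (zb : Euc m) (hzb : zb ∈ cpwlDom d β)
    (vb : Euc m) (hvb : vb ∈ subdiff (cpwlFun a α d β) zb) :
    ∀ u : Euc m, ∀ q ∈ sosd (cpwlFun a α d β) zb vb u, 0 ≤ ⟪q, u⟫ :=
  sosd_cpwl_pos_semidefinite_general hl a α d β hdom zb vb
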